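/- Let Y be an integrable real random variable with continuous strictly increasing CDF F, and let τ ∈ (0,1). Then θ* = F⁻¹(τ) minimizes θ ↦ E[ρ_τ(Y − θ)] over all real θ, where ρ_τ(u) = u·(τ − 1{u < 0}). -/

import Mathlib

open MeasureTheory

/-! For each `y`, the map `θ ↦ ρ_τ(y - θ)` is convex with subgradient `1{y ≤ a} - τ` at `a`.
Taking expectations, `θ ↦ E[ρ_τ(Y - θ)]` has subgradient `F a - τ` at `a`, which vanishes at the
`τ`-quantile. -/

noncomputable def checkLoss (τ u : ℝ) : ℝ := u * (τ - if u < 0 then 1 else 0)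

lemma checkLoss_eq_mul_sub_min (τ u : ℝ) : checkLoss τ u = τ * u - min u 0 := by
  unfold checkLoss
  split_ifs with hu
  · rw [min_eq_left hu.le]; ring
  · rw [min_eq_right (not_lt.1 hu)]; ring

lemma checkLoss_add_mul_le (τ y a b : ℝ) :
    checkLoss τ (y - a) + (b - a) * ((if y ≤ a then 1 else 0) - τ) ≤ checkLoss τ (y - b) := by
  simp only [checkLoss_eq_mul_sub_min]
  split_ifs with hya
  · rw [min_eq_left (sub_nonpos.2 hya)]
    linarith [min_le_left (y - b) 0]
  · rw [min_eq_right (sub_nonneg.2 (not_le.1 hya).le)]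
    linarith [min_le_right (y - b) 0]

lemma ite_le_eq_indicator {Ω : Type*} (Y : Ω → ℝ) (a : ℝ) :
    (fun ω => if Y ω ≤ a then (1 : ℝ) else 0) = {ω | Y ω ≤ a}.indicator 1 := by
  ext ω; simp [Set.indicator_apply]

namespace MeasureTheory

variable {Ω : Type*} [MeasurableSpace Ω] {μ : Measure Ω} {Y : Ω → ℝ}

lemma Integrable.checkLoss_sub [IsFiniteMeasure μ] (hY : Integrable Y μ) (τ a : ℝ) :
    Integrable (fun ω => checkLoss τ (Y ω - a)) μ := by
  have hYa : Integrable (fun ω => Y ω - a) μ := hY.sub (integrable_const a)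
  simp only [checkLoss_eq_mul_sub_min]
  exact (hYa.const_mul τ).sub (hYa.inf (integrable_const 0))

lemma Integrable.ite_le [IsFiniteMeasure μ] (hY : Integrable Y μ) (a : ℝ) :
    Integrable (fun ω => if Y ω ≤ a then (1 : ℝ) else 0) μ := by
  rw [ite_le_eq_indicator]
  exact (integrable_const 1).indicator₀
    (hY.aestronglyMeasurable.nullMeasurableSet_le aestronglyMeasurable_const)

lemma integral_ite_le (hY : Integrable Y μ) (a : ℝ) :
    ∫ ω, (if Y ω ≤ a then (1 : ℝ) else 0) ∂μ = μ.real {ω | Y ω ≤ a} := by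
  rw [ite_le_eq_indicator, integral_indicator₀
    (hY.aestronglyMeasurable.nullMeasurableSet_le aestronglyMeasurable_const)]
  simp

theorem integral_checkLoss_add_mul_le [IsProbabilityMeasure μ] (hY : Integrable Y μ)
    (τ a b : ℝ) :
    ∫ ω, checkLoss τ (Y ω - a) ∂μ + (b - a) * (μ.real {ω | Y ω ≤ a} - τ) ≤
      ∫ ω, checkLoss τ (Y ω - b) ∂μ := by
  have hsub : Integrable (fun ω => (b - a) * ((if Y ω ≤ a then 1 else 0) - τ)) μ :=
    ((hY.ite_le a).sub (integrable_const τ)).const_mul _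
  calc ∫ ω, checkLoss τ (Y ω - a) ∂μ + (b - a) * (μ.real {ω | Y ω ≤ a} - τ)
      = ∫ ω, (checkLoss τ (Y ω - a) + (b - a) * ((if Y ω ≤ a then 1 else 0) - τ)) ∂μ := by
        rw [integral_add (hY.checkLoss_sub τ a) hsub, integral_const_mul,
          integral_sub (hY.ite_le a) (integrable_const τ), integral_ite_le hY]
        simp
    _ ≤ ∫ ω, checkLoss τ (Y ω - b) ∂μ :=
        integral_mono ((hY.checkLoss_sub τ a).add hsub) (hY.checkLoss_sub τ b)
          fun ω => checkLoss_add_mul_le τ (Y ω) a b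

end MeasureTheory

theorem quantile_minimizes_check_loss_general {Ω : Type*} [MeasurableSpace Ω]
    (μ : Measure Ω) [IsProbabilityMeasure μ]
    (Y : Ω → ℝ) (hYint : Integrable Y μ)
    (F : ℝ → ℝ) (hF : ∀ y, F y = (μ {ω | Y ω ≤ y}).toReal)
    (τ : ℝ)
    (θs : ℝ) (hθs : F θs = τ) :
    ∀ θ : ℝ,
      (∫ ω, (Y ω - θs) * (τ - (if Y ω - θs < 0 then (1:ℝ) else 0)) ∂μ) ≤
      (∫ ω, (Y ω - θ) * (τ - (if Y ω - θ < 0 then (1:ℝ) else 0)) ∂μ) := by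
  intro θ
  have hquantile : μ.real {ω | Y ω ≤ θs} - τ = 0 := by
    rw [measureReal_def, ← hF, hθs, sub_self]
  have h := integral_checkLoss_add_mul_le hYint τ θs θ
  rwa [hquantile, mul_zero, add_zero] at h

theorem quantile_minimizes_check_loss {Ω : Type*} [MeasurableSpace Ω]
    (μ : Measure Ω) [IsProbabilityMeasure μ]
    (Y : Ω → ℝ) (hYmeas : Measurable Y) (hYint : Integrable Y μ)
    (F : ℝ → ℝ) (hF : ∀ y, F y = (μ {ω | Y ω ≤ y}).toReal)
    (hFcont : Continuous F) (hFmono : StrictMono F)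
    (τ : ℝ) (hτ : τ ∈ Set.Ioo (0:ℝ) 1)
    (θs : ℝ) (hθs : F θs = τ) :
    ∀ θ : ℝ,
      (∫ ω, (Y ω - θs) * (τ - (if Y ω - θs < 0 then (1:ℝ) else 0)) ∂μ) ≤
      (∫ ω, (Y ω - θ) * (τ - (if Y ω - θ < 0 then (1:ℝ) else 0)) ∂μ) :=
  quantile_minimizes_check_loss_general μ Y hYint F hF τ θs hθs
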